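/- arXiv:2504.17377 — 8 statements merged into one kernel-verified Lean document; each statement's English description precedes it below -/
import Mathlib

section
/- Let F = F₀ + F_v and G = G₀ + G_v be elements of ℍ_ℂ \ {0} whose vector parts satisfy F_v ≠ 0 and G_v ≠ 0. Then the Sylvester operator S_{F,G} is singular (i.e., the ℂ-linear endomorphism z ↦ Fz + zG of ℍ_ℂ is not injective) if and only if (F₀ + G₀)⁴ + 2(F₀ + G₀)²(F_v^s + G_v^s) + (F_v^s − G_v^s)² = 0. -/
/-!
In the basis `1, i, j, k` the matrix of `S_{F,G}` is `a • 1 + A` with `a = F₀ + G₀` and `A` skew,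
its off-diagonal entries being the coordinates of `x = F_v + G_v` and `y = F_v - G_v`. For a skew
`4 × 4` matrix, `det (a • 1 + A) = a⁴ + a² · (x ⬝ x + y ⬝ y) + Pf(A)²` with Pfaffian `Pf(A) = x ⬝ y`.
Here `x ⬝ x + y ⬝ y = 2 (F_v^s + G_v^s)` and `x ⬝ y = F_v^s - G_v^s`, so the determinant is the
stated quartic, and `S_{F,G}` is singular exactly when it vanishes.
-/

open Quaternion

/-- The Sylvester operator `S_{F,G}(z) = Fz + zG` as a `ℂ`-linear endomorphism of the
complex quaternions. -/
noncomputable def sylvesterOp (F G : Quaternion ℂ) : Quaternion ℂ →ₗ[ℂ] Quaternion ℂ :=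
  @LinearMap.mulLeft ℂ _ _ _ _ (Algebra.to_smulCommClass (R := ℂ) (A := Quaternion ℂ)) F +
    @LinearMap.mulRight ℂ _ _ _ _ (IsScalarTower.right (R := ℂ) (A := Quaternion ℂ)) G

namespace Quaternion

variable (R : Type*) [CommRing R]

-- Restated for `ℍ[R]`: `QuaternionAlgebra.basisOneIJK (-1) 0 (-1)` carries the module instance of
-- `ℍ[R,-1,0,-1]`, which does not unify reducibly with that of `ℍ[R]`.
def linearEquivTuple : ℍ[R] ≃ₗ[R] (Fin 4 → R) where
  __ := equivTuple R
  map_add' _ _ := by ext i; fin_cases i <;> rfl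
  map_smul' _ _ := by ext i; fin_cases i <;> rfl

noncomputable def basisOneIJK : Module.Basis (Fin 4) R ℍ[R] :=
  .ofEquivFun (linearEquivTuple R)

@[simp]
theorem coe_basisOneIJK_repr (q : ℍ[R]) :
    (basisOneIJK R).repr q = ![q.re, q.imI, q.imJ, q.imK] := rfl

end Quaternion

namespace Matrix

variable {R : Type*} [CommRing R]

def scalarAddSkew (a : R) (x y : Fin 3 → R) : Matrix (Fin 4) (Fin 4) R :=
  !![a, -x 0, -x 1, -x 2;
     x 0, a, -y 2, y 1;
     x 1, y 2, a, -y 0;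
     x 2, -y 1, y 0, a]

theorem det_scalarAddSkew (a : R) (x y : Fin 3 → R) :
    (scalarAddSkew a x y).det = a ^ 4 + a ^ 2 * (x ⬝ᵥ x + y ⬝ᵥ y) + (x ⬝ᵥ y) ^ 2 := by
  rw [scalarAddSkew, det_succ_row_zero]
  simp only [Fin.sum_univ_four, det_fin_three, submatrix_apply, of_apply, Fin.succAbove, dotProduct,
    Fin.sum_univ_three, cons_val', cons_val_fin_one, cons_val, Fin.isValue, Fin.reduceSucc,
    Fin.reduceCastSucc, Fin.reduceLT, Fin.coe_ofNat_eq_mod, ↓reduceIte]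
  ring

end Matrix

theorem sylvesterOp_apply (F G z : Quaternion ℂ) : sylvesterOp F G z = F * z + z * G := rfl

theorem sylvesterOp_eq_toLin (F G : Quaternion ℂ) :
    sylvesterOp F G = Matrix.toLin (basisOneIJK ℂ) (basisOneIJK ℂ)
      (Matrix.scalarAddSkew (F.re + G.re) ![F.imI + G.imI, F.imJ + G.imJ, F.imK + G.imK]
        ![F.imI - G.imI, F.imJ - G.imJ, F.imK - G.imK]) := by
  ext z : 1
  apply (basisOneIJK ℂ).repr.injective
  ext i
  rw [Matrix.repr_toLin, sylvesterOp_apply]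
  fin_cases i <;>
    simp only [map_add, Finsupp.coe_add, Pi.add_apply, coe_basisOneIJK_repr, re_mul, imI_mul,
      imJ_mul, imK_mul, Matrix.mulVec, dotProduct, Fin.sum_univ_four, Matrix.scalarAddSkew,
      Matrix.of_apply, Matrix.cons_val', Matrix.cons_val_fin_one, Matrix.cons_val, Fin.zero_eta,
      Fin.mk_one, Fin.reduceFinMk, Matrix.cons_val_zero, Matrix.cons_val_one] <;>
    ring

theorem det_sylvesterOp (F G : Quaternion ℂ) :
    LinearMap.det (sylvesterOp F G) =
      (F.re + G.re) ^ 4 + 2 * (F.re + G.re) ^ 2 * (normSq F.im + normSq G.im) +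
        (normSq F.im - normSq G.im) ^ 2 := by
  rw [sylvesterOp_eq_toLin, LinearMap.det_toLin, Matrix.det_scalarAddSkew]
  simp only [dotProduct, Fin.sum_univ_three, Matrix.cons_val, normSq_def', re_im, imI_im, imJ_im,
    imK_im]
  ring

theorem sylvester_singular_iff_general (F G : Quaternion ℂ) :
    ¬ Function.Injective (sylvesterOp F G) ↔
      (F.re + G.re) ^ 4 + 2 * (F.re + G.re) ^ 2 * (normSq F.im + normSq G.im) +
        (normSq F.im - normSq G.im) ^ 2 = 0 := by
  rw [← LinearMap.ker_eq_bot, ← ne_eq, ← LinearMap.det_eq_zero_iff_ker_ne_bot, det_sylvesterOp]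

/-- For `F`, `G` nonzero complex quaternions with nonzero vector parts, the
Sylvester operator `S_{F,G}` is singular iff
`(F₀+G₀)⁴ + 2(F₀+G₀)²(F_v^s + G_v^s) + (F_v^s − G_v^s)² = 0`. -/
theorem sylvester_singular_iff (F G : Quaternion ℂ) (hF : F ≠ 0) (hG : G ≠ 0)
    (hFv : F.im ≠ 0) (hGv : G.im ≠ 0) :
    ¬ Function.Injective (sylvesterOp F G) ↔
      (F.re + G.re) ^ 4 + 2 * (F.re + G.re) ^ 2 * (normSq F.im + normSq G.im) +
        (normSq F.im - normSq G.im) ^ 2 = 0 :=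
  sylvester_singular_iff_general F G
end

section
/- Let Φ = Φ₁i + Φ₂j + Φ₃k be a quaternion over the polynomial ring ℂ[z] (i.e., an element of Quaternion (Polynomial ℂ)) with zero scalar part, satisfying the isotropy condition Φ₁² + Φ₂² + Φ₃² = 0 in ℂ[z] (equivalently normSq Φ = 0). Then there exist a polynomial λ ∈ ℂ[z] and a quaternion A over ℂ[z] such that Φ = λ·(A·L·A^c), where λ acts as a central scalar and L = i + 𝕚j (with 𝕚 the constant polynomial Complex.I). -/
/-!
Put `P = Φ₁ - 𝕚Φ₂`, `Q = Φ₁ + 𝕚Φ₂`; isotropy says `P Q = (𝕚Φ₃)²`. In `ℂ[z]`, a GCD domain in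
which every unit is a square, this forces `P = λ f²`, `Q = λ g²`, `-𝕚Φ₃ = λ f g`: take
`λ = gcd P Q`; the cofactors are coprime with square product, hence both squares.
For `A = f + g i` one has `A L A^c = (f² + g²) i + 𝕚 (f² - g²) j + 2 𝕚 f g k`,
so `Φ = (λ / 2) A L A^c`.
-/

open Quaternion Polynomial

/-- The null quaternion `L = i + 𝕚 j` over the polynomial ring `ℂ[z]`. -/
noncomputable def Lpoly : Quaternion (Polynomial ℂ) :=
  ⟨0, 1, C Complex.I, 0⟩

theorem exists_eq_sq_of_mul_eq_sq {M : Type*} [CommMonoidWithZero M] [GCDMonoid M]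
    (hunit : ∀ u : Mˣ, IsSquare (u : M)) {a b c : M} (hab : IsUnit (gcd a b))
    (h : a * b = c ^ 2) : ∃ f : M, a = f ^ 2 := by
  obtain ⟨t, u, rfl⟩ := exists_associated_pow_of_mul_eq_pow hab h
  obtain ⟨v, hv⟩ := hunit u
  exact ⟨t * v, by rw [hv, mul_pow, sq v]⟩

section SquareFactorization

variable {R : Type*} [CommRing R] [IsDomain R] [GCDMonoid R]

theorem exists_eq_sq_eq_sq_of_mul_eq_sq (hunit : ∀ u : Rˣ, IsSquare (u : R)) {a b c : R}
    (hab : IsUnit (gcd a b)) (h : a * b = c ^ 2) :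
    ∃ f g : R, a = f ^ 2 ∧ b = g ^ 2 ∧ c = f * g := by
  obtain ⟨f, rfl⟩ := exists_eq_sq_of_mul_eq_sq hunit hab h
  obtain ⟨g, rfl⟩ := exists_eq_sq_of_mul_eq_sq hunit ((gcd_comm' _ _).isUnit_iff.mp hab)
    ((mul_comm _ _).trans h)
  rcases sq_eq_sq_iff_eq_or_eq_neg.mp (h.symm.trans (mul_pow f g 2).symm) with hc | hc
  · exact ⟨f, g, rfl, rfl, hc⟩
  · exact ⟨f, -g, rfl, by ring, by rw [hc]; ring⟩

theorem exists_mul_sq_of_mul_eq_sq (hunit : ∀ u : Rˣ, IsSquare (u : R)) {a b c : R}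
    (h : a * b = c ^ 2) :
    ∃ d f g : R, a = d * f ^ 2 ∧ b = d * g ^ 2 ∧ c = d * f * g := by
  obtain ⟨a', b', ha, hb, hab⟩ := extract_gcd a b
  set d := gcd a b
  by_cases hd : d = 0
  · have hc : c = 0 := pow_eq_zero_iff two_ne_zero |>.mp (by rw [← h, ha, hd]; ring)
    exact ⟨0, 0, 0, by rw [ha, hd]; ring, by rw [hb, hd]; ring, by rw [hc]; ring⟩
  obtain ⟨e, he⟩ : d ∣ c :=
    (IsIntegrallyClosed.pow_dvd_pow_iff two_ne_zero).mp ⟨a' * b', by rw [← h, ha, hb]; ring⟩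
  have hab' : a' * b' = e ^ 2 :=
    mul_left_cancel₀ (pow_ne_zero 2 hd) (by rw [← mul_pow, ← he, ← h, ha, hb]; ring)
  obtain ⟨f, g, rfl, rfl, rfl⟩ := exists_eq_sq_eq_sq_of_mul_eq_sq hunit hab hab'
  exact ⟨d, f, g, ha, hb, by rw [he]; ring⟩

end SquareFactorization

theorem Polynomial.isSquare_of_isUnit {K : Type*} [Field K] [IsAlgClosed K] (u : K[X]ˣ) :
    IsSquare (u : K[X]) := by
  obtain ⟨r, -, hr⟩ := Polynomial.isUnit_iff.mp u.isUnit
  obtain ⟨s, rfl⟩ := IsAlgClosed.exists_eq_mul_self r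
  exact ⟨C s, by rw [← hr, C_mul]⟩

theorem eq_smul_mul_Lpoly_mul_star {Φ A : Quaternion ℂ[X]} {lam : ℂ[X]} (hAJ : A.imJ = 0)
    (hAK : A.imK = 0) (hre : Φ.re = 0) (hI : Φ.imI = lam * (A.re ^ 2 + A.imI ^ 2))
    (hJ : Φ.imJ = lam * C Complex.I * (A.re ^ 2 - A.imI ^ 2))
    (hK : Φ.imK = lam * 2 * C Complex.I * A.re * A.imI) :
    Φ = lam • (A * Lpoly * star A) := by
  have hL : Lpoly.re = 0 ∧ Lpoly.imI = 1 ∧ Lpoly.imJ = C Complex.I ∧ Lpoly.imK = 0 :=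
    ⟨rfl, rfl, rfl, rfl⟩
  apply Quaternion.ext <;>
    simp only [re_smul, imI_smul, imJ_smul, imK_smul, smul_eq_mul, re_mul, imI_mul, imJ_mul,
      imK_mul, re_star, imI_star, imJ_star, imK_star, hL, hAJ, hAK, hre, hI, hJ, hK] <;> ring

/-- Every isotropic purely vectorial quaternion `Φ` over `ℂ[z]` can be written
as `Φ = λ • (A L A^c)` with `λ ∈ ℂ[z]` and `A` a quaternion over `ℂ[z]`. -/
theorem poly_minimal_representation (Φ : Quaternion (Polynomial ℂ))
    (hre : Φ.re = 0) (hiso : Φ.imI ^ 2 + Φ.imJ ^ 2 + Φ.imK ^ 2 = 0) :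
    ∃ (lam : Polynomial ℂ) (A : Quaternion (Polynomial ℂ)),
      Φ = lam • (A * Lpoly * star A) := by
  have hI : (C Complex.I : ℂ[X]) ^ 2 = -1 := by rw [← C_pow, Complex.I_sq, C_neg, C_1]
  have h2 : (C 2⁻¹ : ℂ[X]) * 2 = 1 := by rw [← C_ofNat, ← C_mul, inv_mul_cancel₀ two_ne_zero, C_1]
  obtain ⟨lam, f, g, hf, hg, hfg⟩ := exists_mul_sq_of_mul_eq_sq Polynomial.isSquare_of_isUnit
    (a := Φ.imI - C Complex.I * Φ.imJ) (b := Φ.imI + C Complex.I * Φ.imJ)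
    (c := -(C Complex.I * Φ.imK)) (by linear_combination hiso - (Φ.imJ ^ 2 + Φ.imK ^ 2) * hI)
  refine ⟨C 2⁻¹ * lam, ⟨f, g, 0, 0⟩,
    eq_smul_mul_Lpoly_mul_star rfl rfl hre ?_ ?_ ?_⟩ <;> dsimp only
  · linear_combination C 2⁻¹ * (hf + hg) - Φ.imI * h2
  · linear_combination C 2⁻¹ * C Complex.I * (hf - hg) - Φ.imJ * h2 + C 2⁻¹ * 2 * Φ.imJ * hI
  · linear_combination C 2⁻¹ * 2 * C Complex.I * hfg - Φ.imK * h2 + C 2⁻¹ * 2 * Φ.imK * hI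
end

section
/- Let Φ = Φ₁i + Φ₂j + Φ₃k be a quaternion over the field of rational functions ℂ(z) (i.e., an element of Quaternion (RatFunc ℂ)) with zero scalar part, satisfying the isotropy condition Φ₁² + Φ₂² + Φ₃² = 0 in ℂ(z) (equivalently normSq Φ = 0). Then there exist a rational function λ ∈ ℂ(z) and a quaternion A over the polynomial ring ℂ[z] such that, after mapping the coefficients of A into ℂ(z), Φ = λ·(A·L·A^c), where λ acts as a central scalar and L = i + 𝕚j (with 𝕚 the constant Complex.I in ℂ(z)). -/
set_option synthInstance.maxHeartbeats 400000
set_option maxHeartbeats 400000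

open Quaternion

/-- Componentwise embedding of quaternions over `ℂ[z]` into quaternions over `ℂ(z)`. -/
noncomputable def quatPolyToRatFunc (A : Quaternion (Polynomial ℂ)) :
    Quaternion (RatFunc ℂ) :=
  ⟨algebraMap (Polynomial ℂ) (RatFunc ℂ) A.re,
    algebraMap (Polynomial ℂ) (RatFunc ℂ) A.imI,
    algebraMap (Polynomial ℂ) (RatFunc ℂ) A.imJ,
    algebraMap (Polynomial ℂ) (RatFunc ℂ) A.imK⟩

/-- The null quaternion `L = i + 𝕚 j` over the field of rational functions `ℂ(z)`. -/
noncomputable def Lrat : Quaternion (RatFunc ℂ) :=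
  ⟨0, 1, RatFunc.C Complex.I, 0⟩

/-!
Put `u = Φ₁ + 𝕚Φ₂`. If `u = 0`, isotropy gives `Φ₃² = -(Φ₁ + 𝕚Φ₂)(Φ₁ - 𝕚Φ₂) = 0`, so
`Φ = Φ₁ L`. Otherwise take `B = -𝕚Φ₃ + u i`: since
`(q + p i) L (q + p i)ᶜ = (q² + p²) i + 𝕚(q² - p²) j + 2𝕚qp k`, isotropy gives `B L Bᶜ = 2u Φ`.
Clearing denominators, `w B = A` with `A` polynomial, and then `Φ = (2u w²)⁻¹ A L Aᶜ`.
-/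

open Polynomial

section CommRing

variable {R : Type*} [CommRing R] {J : R}

theorem mk_mul_mk_mul_star_mk (q p : R) :
    (⟨q, p, 0, 0⟩ : ℍ[R]) * (⟨0, 1, J, 0⟩ : ℍ[R]) * star (⟨q, p, 0, 0⟩ : ℍ[R]) =
      (⟨0, q ^ 2 + p ^ 2, J * (q ^ 2 - p ^ 2), 2 * J * q * p⟩ : ℍ[R]) := by
  ext <;> simp <;> ring

theorem smul_mul_mul_star_smul (w : R) (A L : ℍ[R]) :
    (w • A) * L * star (w • A) = w ^ 2 • (A * L * star A) := by
  rw [Quaternion.star_smul, smul_mul_assoc, smul_mul_assoc, mul_smul_comm, smul_smul, sq]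

theorem two_mul_smul_eq_mul_mul_star (hJ : J * J = -1) (Φ : ℍ[R]) (hre : Φ.re = 0)
    (hiso : Φ.imI ^ 2 + Φ.imJ ^ 2 + Φ.imK ^ 2 = 0) :
    (2 * (Φ.imI + J * Φ.imJ)) • Φ =
      (⟨-J * Φ.imK, Φ.imI + J * Φ.imJ, 0, 0⟩ : ℍ[R]) * (⟨0, 1, J, 0⟩ : ℍ[R]) *
        star (⟨-J * Φ.imK, Φ.imI + J * Φ.imJ, 0, 0⟩ : ℍ[R]) := by
  rw [mk_mul_mk_mul_star_mk]
  ext <;> simp only [Quaternion.re_smul, Quaternion.imI_smul, Quaternion.imJ_smul,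
    Quaternion.imK_smul, smul_eq_mul, hre, mul_zero]
  · linear_combination hiso - (Φ.imJ ^ 2 + Φ.imK ^ 2) * hJ
  · linear_combination J * hiso + (2 * Φ.imI * Φ.imJ + J * Φ.imJ ^ 2 - J * Φ.imK ^ 2) * hJ
  · linear_combination 2 * (Φ.imI + J * Φ.imJ) * Φ.imK * hJ

theorem eq_imI_smul_of_imI_add_mul_imJ_eq_zero [NoZeroDivisors R] (hJ : J * J = -1) (Φ : ℍ[R])
    (hre : Φ.re = 0) (hiso : Φ.imI ^ 2 + Φ.imJ ^ 2 + Φ.imK ^ 2 = 0)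
    (hu : Φ.imI + J * Φ.imJ = 0) :
    Φ = Φ.imI • (⟨0, 1, J, 0⟩ : ℍ[R]) := by
  have hK : Φ.imK = 0 := pow_eq_zero_iff two_ne_zero |>.mp <| by
    linear_combination hiso - (Φ.imI - J * Φ.imJ) * hu - Φ.imJ ^ 2 * hJ
  ext <;> simp [hre, hK]
  linear_combination -J * hu + Φ.imJ * hJ

end CommRing

theorem exists_quatPolyToRatFunc_eq_smul (q : ℍ[RatFunc ℂ]) :
    ∃ w : RatFunc ℂ, w ≠ 0 ∧ ∃ A : ℍ[ℂ[X]], quatPolyToRatFunc A = w • q := by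
  obtain ⟨b, hb⟩ := IsLocalization.exist_integer_multiples (nonZeroDivisors ℂ[X]) Finset.univ
    ![q.re, q.imI, q.imJ, q.imK]
  choose a ha using fun i => hb i (Finset.mem_univ i)
  refine ⟨algebraMap _ _ (b : ℂ[X]), IsFractionRing.to_map_ne_zero_of_mem_nonZeroDivisors b.2,
    ⟨a 0, a 1, a 2, a 3⟩, ?_⟩
  ext <;> simp [quatPolyToRatFunc, ha, Algebra.smul_def]

/-- Every isotropic purely vectorial quaternion `Φ` over `ℂ(z)` can be written
as `Φ = λ • (A L A^c)` with `λ ∈ ℂ(z)` and `A` a quaternion over the polynomial ring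
`ℂ[z]`, mapped coefficientwise into `ℂ(z)`. -/
theorem rat_minimal_representation (Φ : Quaternion (RatFunc ℂ))
    (hre : Φ.re = 0) (hiso : Φ.imI ^ 2 + Φ.imJ ^ 2 + Φ.imK ^ 2 = 0) :
    ∃ (lam : RatFunc ℂ) (A : Quaternion (Polynomial ℂ)),
      Φ = lam • (quatPolyToRatFunc A * Lrat * star (quatPolyToRatFunc A)) := by
  set J : RatFunc ℂ := RatFunc.C Complex.I
  have hL : (⟨0, 1, J, 0⟩ : ℍ[RatFunc ℂ]) = Lrat := rfl
  have hJ : J * J = -1 := by rw [← map_mul, Complex.I_mul_I, map_neg, map_one]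
  by_cases hu : Φ.imI + J * Φ.imJ = 0
  · have hΦ := eq_imI_smul_of_imI_add_mul_imJ_eq_zero hJ Φ hre hiso hu
    have h1 : quatPolyToRatFunc 1 = 1 := by ext <;> simp [quatPolyToRatFunc]
    refine ⟨Φ.imI, 1, ?_⟩
    rwa [h1, one_mul, star_one, mul_one, ← hL]
  · obtain ⟨B, hΦ⟩ : ∃ B, (2 * (Φ.imI + J * Φ.imJ)) • Φ = B * Lrat * star B :=
      ⟨_, hL ▸ two_mul_smul_eq_mul_mul_star hJ Φ hre hiso⟩
    obtain ⟨w, hw, A, hA⟩ := exists_quatPolyToRatFunc_eq_smul B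
    have hc : 2 * (Φ.imI + J * Φ.imJ) * w ^ 2 ≠ 0 := by simp [hu, hw]
    refine ⟨(2 * (Φ.imI + J * Φ.imJ) * w ^ 2)⁻¹, A, ?_⟩
    rw [hA, smul_mul_mul_star_smul, ← hΦ, smul_smul, smul_smul, mul_assoc, mul_comm (w ^ 2),
      inv_mul_cancel₀ hc, one_smul]
end

section
/- For all p, q ∈ ℂ, setting A = p + p·i + q·j + q·k ∈ ℍ_ℂ, one has the identity A·L·A^c = 2·((p² − q²)·i + 2pq·j + 𝕚(p² + q²)·k). (This expresses that the Weierstraß–Enneper/preimage representation Φ = w(p² − q², 2pq, 𝕚(p² + q²)) of polynomial minimal surfaces is covered by the quaternionic representation λ·A·L·A^c.) -/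
open Quaternion

/-- The complex quaternion `a + b i + c j + d k`. -/
noncomputable def mkQ (a b c d : ℂ) : Quaternion ℂ := ⟨a, b, c, d⟩

/-- The null quaternion `L = i + 𝕚 j ∈ ℍ_ℂ`. -/
noncomputable def Lq : Quaternion ℂ := mkQ 0 1 Complex.I 0

section mkQ

variable (a b c d : ℂ)

@[simp] theorem re_mkQ : (mkQ a b c d).re = a := rfl

@[simp] theorem imI_mkQ : (mkQ a b c d).imI = b := rfl

@[simp] theorem imJ_mkQ : (mkQ a b c d).imJ = c := rfl

@[simp] theorem imK_mkQ : (mkQ a b c d).imK = d := rfl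

theorem mkQ_mul_mkQ (a' b' c' d' : ℂ) :
    mkQ a b c d * mkQ a' b' c' d' =
      mkQ (a * a' - b * b' - c * c' - d * d') (a * b' + b * a' + c * d' - d * c')
        (a * c' - b * d' + c * a' + d * b') (a * d' + b * c' - c * b' + d * a') := by
  ext <;> simp only [re_mul, imI_mul, imJ_mul, imK_mul, re_mkQ, imI_mkQ, imJ_mkQ, imK_mkQ]

theorem star_mkQ : star (mkQ a b c d) = mkQ a (-b) (-c) (-d) := by
  ext <;> simp only [re_star, imI_star, imJ_star, imK_star, re_mkQ, imI_mkQ, imJ_mkQ, imK_mkQ]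

theorem smul_mkQ (r : ℂ) : r • mkQ a b c d = mkQ (r * a) (r * b) (r * c) (r * d) := by
  ext <;> simp only [re_smul, imI_smul, imJ_smul, imK_smul, re_mkQ, imI_mkQ, imJ_mkQ, imK_mkQ,
    smul_eq_mul]

end mkQ

/-- For `A = p + p i + q j + q k` one has
`A L A^c = 2((p² − q²) i + 2pq j + 𝕚(p² + q²) k)`. -/
theorem preimage_to_quaternionic (p q : ℂ) :
    mkQ p p q q * Lq * star (mkQ p p q q) =
      (2 : ℂ) • mkQ 0 (p ^ 2 - q ^ 2) (2 * p * q) (Complex.I * (p ^ 2 + q ^ 2)) := by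
  simp only [Lq, star_mkQ, mkQ_mul_mkQ, smul_mkQ]
  -- `𝕚` enters only linearly through `L`, so `𝕚 ^ 2 = -1` is never needed.
  congr 1 <;> ring
end

section
/- For all a₀, a₁, a₂, a₃ ∈ ℂ, setting A = a₀ + a₁·i + a₂·j + a₃·k ∈ ℍ_ℂ, p = (a₀ + a₁ + 𝕚a₂ − 𝕚a₃)/2, and q = (𝕚a₀ − 𝕚a₁ + a₂ + a₃)/2, one has the identity A·L·A^c = 2·((p² − q²)·i + 2pq·j + 𝕚(p² + q²)·k). (This is the converse direction of the equivalence between the representation Φ = w(p² − q², 2pq, 𝕚(p² + q²)) and the quaternionic representation λ·A·L·A^c.) -/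
open Quaternion

/-!
Since `k L = -𝕚 L` and `j L = 𝕚 i L`, the product `A L` only sees the `ℂ[i]`-part
`B = (a₀ - 𝕚a₃) + (a₁ + 𝕚a₂) i` of `A`; as `L^c = -L`, conjugating gives `L A^c = L B^c`,
hence `A L A^c = B L B^c`. In terms of `p, q` one has `B = (p - 𝕚q) + (p + 𝕚q) i`, and
`B L B^c` is a short direct computation.
-/

@[simp] lemma mkQ_re (a b c d : ℂ) : (mkQ a b c d).re = a := rfl
@[simp] lemma mkQ_imI (a b c d : ℂ) : (mkQ a b c d).imI = b := rfl
@[simp] lemma mkQ_imJ (a b c d : ℂ) : (mkQ a b c d).imJ = c := rfl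
@[simp] lemma mkQ_imK (a b c d : ℂ) : (mkQ a b c d).imK = d := rfl

theorem mul_mul_star_eq_of_mul_eq {R : Type*} [Ring R] [StarRing R] {L a b : R}
    (hL : star L = -L) (h : a * L = b * L) : a * L * star a = b * L * star b := by
  have h' : L * star a = L * star b := by
    simpa [hL] using congrArg star h
  rw [mul_assoc, h', ← mul_assoc, h]

open Complex

theorem star_Lq : star Lq = -Lq := by
  ext <;> simp [Lq]

theorem mkQ_mul_Lq (a₀ a₁ a₂ a₃ : ℂ) :
    mkQ a₀ a₁ a₂ a₃ * Lq = mkQ (a₀ - I * a₃) (a₁ + I * a₂) 0 0 * Lq := by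
  ext <;> simp only [Lq, re_mul, imI_mul, imJ_mul, imK_mul, mkQ_re, mkQ_imI, mkQ_imJ, mkQ_imK] <;>
    ring_nf <;> simp only [I_sq] <;> ring

theorem mkQ_mul_Lq_mul_star (p q : ℂ) :
    mkQ (p - I * q) (p + I * q) 0 0 * Lq * star (mkQ (p - I * q) (p + I * q) 0 0) =
      (2 : ℂ) • mkQ 0 (p ^ 2 - q ^ 2) (2 * p * q) (I * (p ^ 2 + q ^ 2)) := by
  ext <;>
    simp only [Lq, re_mul, imI_mul, imJ_mul, imK_mul, re_star, imI_star, imJ_star, imK_star,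
      re_smul, imI_smul, imJ_smul, imK_smul, smul_eq_mul, mkQ_re, mkQ_imI, mkQ_imJ, mkQ_imK] <;>
    ring_nf <;> simp only [I_sq, I_pow_three] <;> ring

/-- For `A = a₀ + a₁ i + a₂ j + a₃ k`, with
`p = (a₀ + a₁ + 𝕚a₂ − 𝕚a₃)/2` and `q = (𝕚a₀ − 𝕚a₁ + a₂ + a₃)/2`, one has
`A L A^c = 2((p² − q²) i + 2pq j + 𝕚(p² + q²) k)`. -/
theorem quaternionic_to_preimage (a₀ a₁ a₂ a₃ : ℂ)
    (p q : ℂ) (hp : p = (a₀ + a₁ + Complex.I * a₂ - Complex.I * a₃) / 2)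
    (hq : q = (Complex.I * a₀ - Complex.I * a₁ + a₂ + a₃) / 2) :
    mkQ a₀ a₁ a₂ a₃ * Lq * star (mkQ a₀ a₁ a₂ a₃) =
      (2 : ℂ) • mkQ 0 (p ^ 2 - q ^ 2) (2 * p * q) (Complex.I * (p ^ 2 + q ^ 2)) := by
  have hre : a₀ - I * a₃ = p - I * q := by
    rw [hp, hq]; linear_combination (a₀ - a₁) / 2 * I_sq
  have him : a₁ + I * a₂ = p + I * q := by
    rw [hp, hq]; linear_combination (a₁ - a₀) / 2 * I_sq
  rw [mul_mul_star_eq_of_mul_eq star_Lq (mkQ_mul_Lq a₀ a₁ a₂ a₃), hre, him]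
  exact mkQ_mul_Lq_mul_star p q
end

section
/- For all polynomials a, b ∈ ℂ[X], the greatest common divisor gcd(gcd(a² − b², a² + b²), a·b) is associated to (gcd(a, b))². (This is the computation C^s = gcd(C₁₂² − C₀₃², C₁₂² + C₀₃², C₁₂C₀₃) = gcd(C₁₂, C₀₃)² = σ² used in the representation theorem for polynomial minimal surfaces.) -/
open Polynomial

/-- For polynomials `a, b ∈ ℂ[X]`,
`gcd(gcd(a² − b², a² + b²), a·b)` is associated to `gcd(a, b)²`. -/
theorem gcd_squares (a b : Polynomial ℂ) :
    Associated (gcd (gcd (a ^ 2 - b ^ 2) (a ^ 2 + b ^ 2)) (a * b)) (gcd a b ^ 2) := by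
  set g := gcd a b with hg
  have h2u : IsUnit (2 : Polynomial ℂ) := by
    have h := isUnit_C.mpr (isUnit_iff_ne_zero.mpr (two_ne_zero : (2:ℂ) ≠ 0))
    rwa [map_ofNat] at h
  apply associated_of_dvd_dvd
  · set d := gcd (gcd (a ^ 2 - b ^ 2) (a ^ 2 + b ^ 2)) (a * b) with hd
    have hdab : d ∣ a * b := gcd_dvd_right _ _
    have h1 : d ∣ a ^ 2 - b ^ 2 := (gcd_dvd_left _ _).trans (gcd_dvd_left _ _)
    have h2 : d ∣ a ^ 2 + b ^ 2 := (gcd_dvd_left _ _).trans (gcd_dvd_right _ _)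
    have ha2 : d ∣ a ^ 2 := by
      have hsum : d ∣ 2 * a ^ 2 := by
        have heq : 2 * a ^ 2 = (a ^ 2 - b ^ 2) + (a ^ 2 + b ^ 2) := by ring
        rw [heq]; exact dvd_add h1 h2
      exact hsum.trans ((h2u.mul_left_dvd).mpr dvd_rfl)
    have hb2 : d ∣ b ^ 2 := by
      have hsum : d ∣ 2 * b ^ 2 := by
        have heq : 2 * b ^ 2 = (a ^ 2 + b ^ 2) - (a ^ 2 - b ^ 2) := by ring
        rw [heq]; exact dvd_sub h2 h1
      exact hsum.trans ((h2u.mul_left_dvd).mpr dvd_rfl)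
    have hda : d ∣ a * g := by
      have : d ∣ gcd (a * a) (a * b) := dvd_gcd (by rwa [← pow_two]) hdab
      rw [gcd_mul_left] at this
      exact this.trans (mul_dvd_mul_right (normalize_associated a).dvd g)
    have hdb : d ∣ b * g := by
      have : d ∣ gcd (b * b) (b * a) := dvd_gcd (by rwa [← pow_two]) (by rwa [mul_comm])
      rw [gcd_mul_left, gcd_comm b a] at this
      exact this.trans (mul_dvd_mul_right (normalize_associated b).dvd g)
    have : d ∣ gcd (a * g) (b * g) := dvd_gcd hda hdb
    rw [gcd_mul_right, ← hg] at this
    calc d ∣ g * normalize g := this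
      _ ∣ g ^ 2 := by rw [pow_two]; exact mul_dvd_mul_left g (normalize_associated g).dvd
  · have hga : g ∣ a := gcd_dvd_left a b
    have hgb : g ∣ b := gcd_dvd_right a b
    have h1 : g ^ 2 ∣ a ^ 2 := pow_dvd_pow_of_dvd hga 2
    have h2 : g ^ 2 ∣ b ^ 2 := pow_dvd_pow_of_dvd hgb 2
    exact dvd_gcd (dvd_gcd (dvd_sub h1 h2) (dvd_add h1 h2))
      (by rw [pow_two]; exact mul_dvd_mul hga hgb)
end

section
/- Let Ω ⊆ ℂ be a nonempty open connected set and let Φ : Ω → ℍ_ℂ be a function whose four complex component functions are analytic on Ω, such that the scalar part of Φ(z) is 0 and normSq(Φ(z)) = 0 for all z ∈ Ω, and Φ is not identically zero on Ω. Then there exists a function χ : Ω → ℍ_ℂ whose four complex component functions are meromorphic on Ω, such that for all z in Ω outside a set that is discrete and closed in Ω one has normSq(χ(z)) ≠ 0 and Φ(z)·χ(z) = χ(z)·L (equivalently Φ(z) = χ(z)·L·χ(z)⁻¹). -/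
/-! A pure isotropic quaternion squares to zero, and so does `L`. Hence for every constant `q`
the holomorphic curve `χ = Φ q + q L` satisfies `Φ χ = Φ q L = χ L`. At a point `z₀` with
`Φ z₀ ≠ 0` one of `q = 1`, `q = j` makes `normSq (χ z₀) ≠ 0`, and then the zeros of the
holomorphic function `normSq ∘ χ` are isolated in the connected domain `Ω`. -/

open Quaternion

open Filter Topology

theorem mul_mul_add_mul_eq_mul_add_mul_mul {R : Type*} [NonUnitalRing R] {a b : R}
    (ha : a * a = 0) (hb : b * b = 0) (q : R) :
    a * (a * q + q * b) = (a * q + q * b) * b := by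
  rw [mul_add, add_mul, ← mul_assoc, ha, zero_mul, mul_assoc q, hb, mul_zero, zero_add,
    add_zero, mul_assoc]

theorem Quaternion.mul_self_eq_zero_of_re_eq_zero_of_normSq_eq_zero {R : Type*} [CommRing R] [NoZeroDivisors R]
    [CharZero R] {a : ℍ[R]} (hre : a.re = 0) (hnorm : normSq a = 0) : a * a = 0 := by
  have h := self_mul_star a
  rwa [star_eq_neg.mpr hre, hnorm, coe_zero, mul_neg, neg_eq_zero] at h

theorem Lq_mul_self : Lq * Lq = 0 := by
  ext <;> simp only [Quaternion.re_mul, Quaternion.imI_mul, Quaternion.imJ_mul,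
    Quaternion.imK_mul] <;> simp [Lq, mkQ]

theorem normSq_add_Lq (a : ℍ[ℂ]) :
    normSq (a + Lq) = normSq a + 2 * (a.imI + Complex.I * a.imJ) := by
  simp only [normSq_def', Quaternion.re_add, Quaternion.imI_add, Quaternion.imJ_add,
    Quaternion.imK_add]
  simp only [Lq, mkQ]
  linear_combination Complex.I_sq

theorem normSq_mul_j_add_j_mul_Lq (a : ℍ[ℂ]) :
    normSq (a * mkQ 0 0 1 0 + mkQ 0 0 1 0 * Lq) =
      normSq a - 2 * (a.imI - Complex.I * a.imJ) := by
  simp only [normSq_def', Quaternion.re_add, Quaternion.imI_add, Quaternion.imJ_add,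
    Quaternion.imK_add, Quaternion.re_mul, Quaternion.imI_mul, Quaternion.imJ_mul,
    Quaternion.imK_mul]
  simp only [Lq, mkQ]
  linear_combination Complex.I_sq

theorem exists_normSq_mul_add_mul_Lq_ne_zero {a : ℍ[ℂ]} (hre : a.re = 0)
    (hnorm : normSq a = 0) (ha : a ≠ 0) : ∃ q : ℍ[ℂ], normSq (a * q + q * Lq) ≠ 0 := by
  by_contra! h
  have h₁ := h 1
  have hj := h (mkQ 0 0 1 0)
  rw [mul_one, one_mul, normSq_add_Lq, hnorm] at h₁
  rw [normSq_mul_j_add_j_mul_Lq, hnorm] at hj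
  have hI : a.imI = 0 := by linear_combination (h₁ - hj) / 4
  have hJ : a.imJ = 0 := by
    linear_combination (-Complex.I / 4) * (h₁ + hj) + a.imJ * Complex.I_sq
  have hK : a.imK = 0 := by
    have hsum := normSq_def' a
    rw [hnorm, hre, hI, hJ] at hsum
    exact pow_eq_zero_iff two_ne_zero |>.mp (by linear_combination -hsum)
  exact ha (Quaternion.ext _ _ hre hI hJ hK)

theorem AnalyticOnNhd.exists_mem_nhds_finite_zeros {𝕜 E : Type*} [NontriviallyNormedField 𝕜]
    [NormedAddCommGroup E] [NormedSpace 𝕜 E] {f : 𝕜 → E} {U : Set 𝕜}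
    (hf : AnalyticOnNhd 𝕜 f U) (hU : IsPreconnected U) {z₀ : 𝕜} (hz₀ : z₀ ∈ U)
    (hfz₀ : f z₀ ≠ 0) : ∀ z ∈ U, ∃ t ∈ 𝓝 z, ({w ∈ U | f w = 0} ∩ t).Finite := by
  have hcodiscrete : ∀ᶠ w in codiscreteWithin U, f w ≠ 0 :=
    (hf.eqOn_zero_or_eventually_ne_zero_of_preconnected hU).resolve_left fun h => hfz₀ (h hz₀)
  intro z hz
  obtain ⟨t, ht, hfin⟩ := codiscreteWithin_iff_locallyFiniteComplementWithin.mp hcodiscrete z hz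
  refine ⟨t, ht, hfin.subset ?_⟩
  rintro w ⟨⟨hwU, hw⟩, hwt⟩
  exact ⟨hwt, hwU, fun h => h hw⟩

def QuaternionAnalyticOnNhd (f : ℂ → ℍ[ℂ]) (s : Set ℂ) : Prop :=
  AnalyticOnNhd ℂ (fun z => (f z).re) s ∧ AnalyticOnNhd ℂ (fun z => (f z).imI) s ∧
    AnalyticOnNhd ℂ (fun z => (f z).imJ) s ∧ AnalyticOnNhd ℂ (fun z => (f z).imK) s

namespace QuaternionAnalyticOnNhd

variable {f g : ℂ → ℍ[ℂ]} {s : Set ℂ}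

theorem const (q : ℍ[ℂ]) : QuaternionAnalyticOnNhd (fun _ => q) s :=
  ⟨analyticOnNhd_const, analyticOnNhd_const, analyticOnNhd_const, analyticOnNhd_const⟩

theorem add (hf : QuaternionAnalyticOnNhd f s) (hg : QuaternionAnalyticOnNhd g s) :
    QuaternionAnalyticOnNhd (fun z => f z + g z) s := by
  obtain ⟨hf₀, hf₁, hf₂, hf₃⟩ := hf
  obtain ⟨hg₀, hg₁, hg₂, hg₃⟩ := hg
  exact ⟨hf₀.add hg₀, hf₁.add hg₁, hf₂.add hg₂, hf₃.add hg₃⟩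

theorem mul (hf : QuaternionAnalyticOnNhd f s) (hg : QuaternionAnalyticOnNhd g s) :
    QuaternionAnalyticOnNhd (fun z => f z * g z) s := by
  obtain ⟨hf₀, hf₁, hf₂, hf₃⟩ := hf
  obtain ⟨hg₀, hg₁, hg₂, hg₃⟩ := hg
  simp only [QuaternionAnalyticOnNhd, Quaternion.re_mul, Quaternion.imI_mul, Quaternion.imJ_mul,
    Quaternion.imK_mul]
  refine ⟨?_, ?_, ?_, ?_⟩ <;>
    apply_rules [AnalyticOnNhd.add, AnalyticOnNhd.sub, AnalyticOnNhd.mul]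

theorem normSq (hf : QuaternionAnalyticOnNhd f s) :
    AnalyticOnNhd ℂ (fun z => normSq (f z)) s := by
  obtain ⟨hf₀, hf₁, hf₂, hf₃⟩ := hf
  simp only [normSq_def']
  exact (((hf₀.pow 2).add (hf₁.pow 2)).add (hf₂.pow 2)).add (hf₃.pow 2)

end QuaternionAnalyticOnNhd

theorem exists_meromorphic_conjugation_general (Ω : Set ℂ) (hΩc : IsConnected Ω)
    (Φ : ℂ → Quaternion ℂ)
    (han_re : AnalyticOnNhd ℂ (fun z => (Φ z).re) Ω)
    (han_imI : AnalyticOnNhd ℂ (fun z => (Φ z).imI) Ω)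
    (han_imJ : AnalyticOnNhd ℂ (fun z => (Φ z).imJ) Ω)
    (han_imK : AnalyticOnNhd ℂ (fun z => (Φ z).imK) Ω)
    (hre : ∀ z ∈ Ω, (Φ z).re = 0)
    (hiso : ∀ z ∈ Ω, normSq (Φ z) = 0)
    (hne : ∃ z ∈ Ω, Φ z ≠ 0) :
    ∃ χ : ℂ → Quaternion ℂ,
      MeromorphicOn (fun z => (χ z).re) Ω ∧
      MeromorphicOn (fun z => (χ z).imI) Ω ∧
      MeromorphicOn (fun z => (χ z).imJ) Ω ∧
      MeromorphicOn (fun z => (χ z).imK) Ω ∧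
      ∃ E : Set ℂ, E ⊆ Ω ∧ (∀ z ∈ Ω, ∃ U ∈ nhds z, (E ∩ U).Finite) ∧
        ∀ z ∈ Ω \ E, normSq (χ z) ≠ 0 ∧ Φ z * χ z = χ z * Lq := by
  obtain ⟨z₀, hz₀, hΦz₀⟩ := hne
  obtain ⟨q, hq⟩ := exists_normSq_mul_add_mul_Lq_ne_zero (hre z₀ hz₀) (hiso z₀ hz₀) hΦz₀
  let χ : ℂ → ℍ[ℂ] := fun z => Φ z * q + q * Lq
  have hχ : QuaternionAnalyticOnNhd χ Ω :=
    (QuaternionAnalyticOnNhd.mul ⟨han_re, han_imI, han_imJ, han_imK⟩ (.const q)).add (.const _)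
  have hzeros := hχ.normSq.exists_mem_nhds_finite_zeros hΩc.isPreconnected hz₀ hq
  obtain ⟨hχ₀, hχ₁, hχ₂, hχ₃⟩ := hχ
  refine ⟨χ, hχ₀.meromorphicOn, hχ₁.meromorphicOn, hχ₂.meromorphicOn, hχ₃.meromorphicOn,
    {z ∈ Ω | normSq (χ z) = 0}, Set.sep_subset _ _, hzeros, fun z hz => ⟨?_, ?_⟩⟩
  · exact fun h => hz.2 ⟨hz.1, h⟩
  · exact mul_mul_add_mul_eq_mul_add_mul_mul
      (mul_self_eq_zero_of_re_eq_zero_of_normSq_eq_zero (hre z hz.1) (hiso z hz.1)) Lq_mul_self q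

/-- A not identically vanishing isotropic vectorial holomorphic curve
`Φ : Ω → ℍ_ℂ` on a nonempty open connected `Ω ⊆ ℂ` is conjugate to the constant `L` by a
meromorphic curve `χ`: outside a discrete and closed subset of `Ω` (encoded as a subset of
`Ω` that is locally finite in `Ω`), `χ` has nonzero complex squared norm and
`Φ χ = χ L`, i.e. `Φ = χ L χ⁻¹`. -/
theorem exists_meromorphic_conjugation (Ω : Set ℂ) (hΩo : IsOpen Ω) (hΩc : IsConnected Ω)
    (Φ : ℂ → Quaternion ℂ)
    (han_re : AnalyticOnNhd ℂ (fun z => (Φ z).re) Ω)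
    (han_imI : AnalyticOnNhd ℂ (fun z => (Φ z).imI) Ω)
    (han_imJ : AnalyticOnNhd ℂ (fun z => (Φ z).imJ) Ω)
    (han_imK : AnalyticOnNhd ℂ (fun z => (Φ z).imK) Ω)
    (hre : ∀ z ∈ Ω, (Φ z).re = 0)
    (hiso : ∀ z ∈ Ω, normSq (Φ z) = 0)
    (hne : ∃ z ∈ Ω, Φ z ≠ 0) :
    ∃ χ : ℂ → Quaternion ℂ,
      MeromorphicOn (fun z => (χ z).re) Ω ∧
      MeromorphicOn (fun z => (χ z).imI) Ω ∧
      MeromorphicOn (fun z => (χ z).imJ) Ω ∧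
      MeromorphicOn (fun z => (χ z).imK) Ω ∧
      ∃ E : Set ℂ, E ⊆ Ω ∧ (∀ z ∈ Ω, ∃ U ∈ nhds z, (E ∩ U).Finite) ∧
        ∀ z ∈ Ω \ E, normSq (χ z) ≠ 0 ∧ Φ z * χ z = χ z * Lq :=
  exists_meromorphic_conjugation_general Ω hΩc Φ han_re han_imI han_imJ han_imK hre hiso hne
end

section
/- Let A₀, A₁ ∈ ℍ_ℂ and define the degree-one quaternionic polynomial A(z) = A₀ + z·A₁ for z ∈ ℂ (complex scalars being central in ℍ_ℂ). Let P₀ ∈ ℂ, θ ∈ ℝ, and r₁, r₂ > 0, let R = r₁ + 𝕚r₂, and let P₁ = P₀ + r₁e^{𝕚θ}, P₂ = P₀ + Re^{𝕚θ}, P₃ = P₀ + 𝕚r₂e^{𝕚θ} be the remaining vertices of the corresponding rectangle. Setting φ_ℓ = A(P_ℓ)·L·A(P_ℓ)^c for ℓ = 0, 1, 2, 3, the linear relation |R|²·φ₀ + R²·φ₁ − |R|²·φ₂ − R²·φ₃ = 0 holds, where |R|² = r₁² + r₂² acts as a complex scalar. -/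
/-!
Since `A(z) = A₀ + z A₁` with `z` central and `(z A₁)^c = z A₁^c`, the map `z ↦ A(z) L A(z)^c` is a
quadratic polynomial in `z` with coefficients in `ℍ_ℂ`; nothing about `L` matters. The relation is
then an identity for every quadratic polynomial: writing `R̄ = r₁ − 𝕚 r₂`, so that `|R|² = R R̄`, the
coefficients of the constant, linear and quadratic parts vanish separately.
-/

open Quaternion

theorem Quaternion.add_smul_mul_mul_star_add_smul {R : Type*} [CommRing R] (a b x : ℍ[R]) (z : R) :
    (a + z • b) * x * star (a + z • b) =
      a * x * star a + z • (a * x * star b + b * x * star a) + z ^ 2 • (b * x * star b) := by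
  simp only [star_add, star_smul, add_mul, mul_add, smul_mul_assoc, mul_smul_comm, smul_add,
    smul_smul]
  module

theorem quadratic_rectangle_relation {M : Type*} [AddCommGroup M] [Module ℂ M] (q : ℂ → M)
    (a b c : M) (hq : ∀ z, q z = a + z • b + z ^ 2 • c) (P₀ u r₁ r₂ : ℂ) :
    (r₁ ^ 2 + r₂ ^ 2) • q P₀ + (r₁ + Complex.I * r₂) ^ 2 • q (P₀ + r₁ * u) -
      (r₁ ^ 2 + r₂ ^ 2) • q (P₀ + (r₁ + Complex.I * r₂) * u) -
      (r₁ + Complex.I * r₂) ^ 2 • q (P₀ + Complex.I * r₂ * u) = 0 := by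
  simp only [hq]
  match_scalars
  · ring
  · linear_combination (-(r₁ + Complex.I * r₂) * u * r₂ ^ 2) * Complex.I_sq
  · linear_combination
      (-(2 * P₀ + (r₁ + Complex.I * r₂) * u) * (r₁ + Complex.I * r₂) * u * r₂ ^ 2) * Complex.I_sq

theorem vertex_linear_relation_general (A₀ A₁ : Quaternion ℂ) (P₀ : ℂ) (θ r₁ r₂ : ℝ)
    (R : ℂ) (hR : R = (r₁ : ℂ) + Complex.I * (r₂ : ℂ))
    (P₁ P₂ P₃ : ℂ)
    (hP₁ : P₁ = P₀ + (r₁ : ℂ) * Complex.exp (Complex.I * (θ : ℂ)))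
    (hP₂ : P₂ = P₀ + R * Complex.exp (Complex.I * (θ : ℂ)))
    (hP₃ : P₃ = P₀ + Complex.I * (r₂ : ℂ) * Complex.exp (Complex.I * (θ : ℂ)))
    (A : ℂ → Quaternion ℂ) (hA : ∀ z : ℂ, A z = A₀ + z • A₁)
    (φ₀ φ₁ φ₂ φ₃ : Quaternion ℂ)
    (hφ₀ : φ₀ = A P₀ * Lq * star (A P₀)) (hφ₁ : φ₁ = A P₁ * Lq * star (A P₁))
    (hφ₂ : φ₂ = A P₂ * Lq * star (A P₂)) (hφ₃ : φ₃ = A P₃ * Lq * star (A P₃)) :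
    ((r₁ : ℂ) ^ 2 + (r₂ : ℂ) ^ 2) • φ₀ + R ^ 2 • φ₁ -
      ((r₁ : ℂ) ^ 2 + (r₂ : ℂ) ^ 2) • φ₂ - R ^ 2 • φ₃ = 0 := by
  subst hR hP₁ hP₂ hP₃ hφ₀ hφ₁ hφ₂ hφ₃
  exact quadratic_rectangle_relation (fun z ↦ A z * Lq * star (A z)) _ _ _
    (fun z ↦ by rw [hA, Quaternion.add_smul_mul_mul_star_add_smul]) P₀ _ r₁ r₂

/-- The values `φ_ℓ = A(P_ℓ) L A(P_ℓ)^c` of a degree-one quaternionic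
polynomial at the vertices of a rectangle satisfy the linear relation
`|R|² φ₀ + R² φ₁ − |R|² φ₂ − R² φ₃ = 0`. -/
theorem vertex_linear_relation (A₀ A₁ : Quaternion ℂ) (P₀ : ℂ) (θ r₁ r₂ : ℝ)
    (hr₁ : 0 < r₁) (hr₂ : 0 < r₂)
    (R : ℂ) (hR : R = (r₁ : ℂ) + Complex.I * (r₂ : ℂ))
    (P₁ P₂ P₃ : ℂ)
    (hP₁ : P₁ = P₀ + (r₁ : ℂ) * Complex.exp (Complex.I * (θ : ℂ)))
    (hP₂ : P₂ = P₀ + R * Complex.exp (Complex.I * (θ : ℂ)))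
    (hP₃ : P₃ = P₀ + Complex.I * (r₂ : ℂ) * Complex.exp (Complex.I * (θ : ℂ)))
    (A : ℂ → Quaternion ℂ) (hA : ∀ z : ℂ, A z = A₀ + z • A₁)
    (φ₀ φ₁ φ₂ φ₃ : Quaternion ℂ)
    (hφ₀ : φ₀ = A P₀ * Lq * star (A P₀)) (hφ₁ : φ₁ = A P₁ * Lq * star (A P₁))
    (hφ₂ : φ₂ = A P₂ * Lq * star (A P₂)) (hφ₃ : φ₃ = A P₃ * Lq * star (A P₃)) :
    ((r₁ : ℂ) ^ 2 + (r₂ : ℂ) ^ 2) • φ₀ + R ^ 2 • φ₁ -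
      ((r₁ : ℂ) ^ 2 + (r₂ : ℂ) ^ 2) • φ₂ - R ^ 2 • φ₃ = 0 :=
  vertex_linear_relation_general A₀ A₁ P₀ θ r₁ r₂ R hR P₁ P₂ P₃ hP₁ hP₂ hP₃ A hA φ₀ φ₁ φ₂ φ₃ hφ₀ hφ₁
    hφ₂ hφ₃
end
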